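/- Let U be an unbalanced critical two-dimensional update family, with the fixed set S_U of four stable directions and constant κ. Then there exists a constant c > 0 (depending only on U) such that every S_U-droplet D internally spanned by A ⊆ ℤ² satisfies |D ∩ A| ≥ c·diam(D), where diam(D) := max{‖x−y‖₂ : x,y ∈ D}. -/

import Mathlib

/-!
The four directions `u*, -u*, u^l, u^r` are the outer normals of bounded polygons, and `0` is a
positive combination `∑ λᵢ uᵢ` of them. Hence the weighted width `∑ λᵢ h_P(uᵢ)` of a finite set
`P` (`h_P` its support function) vanishes on points, bounds the diameter of the polygonal hull of
`P`, and is subadditive up to an additive constant when two hulls are `κ`-close. Starting from the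
singletons of `D ∩ A` and merging parts with `κ`-close hulls yields parts with pairwise
`κ`-separated hulls, each of width `O(|D ∩ A|)`. By stability of the four directions, and because
update rules have range `ν ≤ κ`, the union of these hulls is closed under the process, so the
strongly connected set `L ⊆ [D ∩ A]` lies in a single hull; minimality of `D` keeps `D` within
distance `1` of that hull in each of the four directions.
-/

open MeasureTheory Filter Set

namespace BP

/-- A site of the two-dimensional lattice `ℤ²`. -/
abbrev Site := ℤ × ℤ

/-- One step of the `U`-bootstrap process: a site becomes infected if some update rule,
translated by it, is already entirely infected. -/
def step (U : Finset (Finset Site)) (A : Set Site) : Set Site :=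
  A ∪ {x : Site | ∃ X ∈ U, ∀ y ∈ X, x + y ∈ A}

/-- The sets `A_t` of the `U`-bootstrap process. -/
def iter (U : Finset (Finset Site)) (A : Set Site) : ℕ → Set Site
  | 0 => A
  | t + 1 => step U (iter U A t)

/-- The closure `[A]` of `A` under the `U`-bootstrap process. -/
def bclosure (U : Finset (Finset Site)) (A : Set Site) : Set Site :=
  ⋃ t : ℕ, iter U A t

/-- The inner product of a site with a real vector. -/
noncomputable def ip (x : Site) (u : ℝ × ℝ) : ℝ := (x.1 : ℝ) * u.1 + (x.2 : ℝ) * u.2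

/-- The inner product of two real vectors. -/
noncomputable def ipR (v w : ℝ × ℝ) : ℝ := v.1 * w.1 + v.2 * w.2

/-- `u` is a unit vector, i.e. an element of `S¹`. -/
def unitVec (u : ℝ × ℝ) : Prop := u.1 ^ 2 + u.2 ^ 2 = 1

/-- The discrete half-plane `H_u = {x : ⟨x,u⟩ < 0}`. -/
def halfPlane (u : ℝ × ℝ) : Set Site := {x : Site | ip x u < 0}

/-- `u` is a stable direction for `U`: the half-plane `H_u` is closed under the process. -/
def IsStable (U : Finset (Finset Site)) (u : ℝ × ℝ) : Prop :=
  bclosure U (halfPlane u) = halfPlane u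

/-- The stable set `S = S(U)`, as a set of unit vectors. -/
def stableSet (U : Finset (Finset Site)) : Set (ℝ × ℝ) :=
  {u | unitVec u ∧ IsStable U u}

/-- The discrete line `ℓ_u` through the origin perpendicular to `u`. -/
def line (u : ℝ × ℝ) : Set Site := {x | ip x u = 0}

/-- The perpendicular vector pointing to the right as one looks in the direction `u`. -/
def rightPerp (u : ℝ × ℝ) : ℝ × ℝ := (u.2, -u.1)

/-- `ℓ_u⁺`: the origin together with the sites of `ℓ_u` to the right of the origin
(as one looks in the direction `u`). -/
def linePlus (u : ℝ × ℝ) : Set Site := {x | ip x u = 0 ∧ 0 ≤ ip x (rightPerp u)}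

/-- `ℓ_u⁻`: the origin together with the sites of `ℓ_u` to the left of the origin. -/
def lineMinus (u : ℝ × ℝ) : Set Site := {x | ip x u = 0 ∧ ip x (rightPerp u) ≤ 0}

/-- `α⁺(u)`: the minimum cardinality of a finite set `Z ⊆ ℤ²` such that `[H_u ∪ Z]`
contains infinitely many sites of `ℓ_u⁺` (and `⊤ = ∞` if there is no such set). -/
noncomputable def alphaPlus (U : Finset (Finset Site)) (u : ℝ × ℝ) : ℕ∞ :=
  sInf {n : ℕ∞ | ∃ Z : Finset Site, (Z.card : ℕ∞) = n ∧
    (bclosure U (halfPlane u ∪ ↑Z) ∩ linePlus u).Infinite}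

/-- `α⁻(u)`: as `α⁺(u)`, but for `ℓ_u⁻`. -/
noncomputable def alphaMinus (U : Finset (Finset Site)) (u : ℝ × ℝ) : ℕ∞ :=
  sInf {n : ℕ∞ | ∃ Z : Finset Site, (Z.card : ℕ∞) = n ∧
    (bclosure U (halfPlane u ∪ ↑Z) ∩ lineMinus u).Infinite}

/-- The difficulty `α(u)` of a direction `u`: `min {α⁺(u), α⁻(u)}` if both are finite,
and `∞` otherwise. -/
noncomputable def difficulty (U : Finset (Finset Site)) (u : ℝ × ℝ) : ℕ∞ :=
  if alphaPlus U u ≠ ⊤ ∧ alphaMinus U u ≠ ⊤ then min (alphaPlus U u) (alphaMinus U u)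
  else ⊤

/-- `ᾱ(u) = min {α⁺(u), α⁻(u)}`. -/
noncomputable def alphaBar (U : Finset (Finset Site)) (u : ℝ × ℝ) : ℕ∞ :=
  min (alphaPlus U u) (alphaMinus U u)

/-- The difficulty `α = α(U)` of the update family `U`: the minimum over open
semicircles `C` of the maximum of `α(u)` over `u ∈ C`.  (An open semicircle is
parametrised by its midpoint `w`.) -/
noncomputable def famDifficulty (U : Finset (Finset Site)) : ℕ∞ :=
  ⨅ (w : ℝ × ℝ) (_ : unitVec w),
    ⨆ (u : ℝ × ℝ) (_ : unitVec u) (_ : 0 < ipR u w), difficulty U u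

/-- `U` is critical: some (closed) semicircle has finite intersection with the stable
set, and every open semicircle meets the stable set. -/
def Critical (U : Finset (Finset Site)) : Prop :=
  (∃ w : ℝ × ℝ, unitVec w ∧ (stableSet U ∩ {u | 0 ≤ ipR u w}).Finite) ∧
  (∀ w : ℝ × ℝ, unitVec w → (stableSet U ∩ {u | 0 < ipR u w}).Nonempty)

/-- The balancedness condition: some closed semicircle `C` has `α(u) ≤ α(U)`
for every `u ∈ C`.  A critical family is balanced iff this holds, unbalanced otherwise. -/
def BalancedCond (U : Finset (Finset Site)) : Prop :=
  ∃ w : ℝ × ℝ, unitVec w ∧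
    ∀ u : ℝ × ℝ, unitVec u → 0 ≤ ipR u w → difficulty U u ≤ famDifficulty U

/-- The time `τ` at which the origin is infected (`⊤ = ∞` if it never is). -/
noncomputable def tau (U : Finset (Finset Site)) (A : Set Site) : ℕ∞ :=
  ⨅ (t : ℕ) (_ : (0 : Site) ∈ iter U A t), (t : ℕ∞)

/-- Configurations of initially infected sites in the plane. -/
abbrev Config := Site → Bool

/-- The set of initially infected sites of a configuration. -/
def initSet (ω : Config) : Set Site := {x | ω x = true}

/-- `μ` is the product Bernoulli(`p`) measure (law of a "`p`-random set"): a probability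
measure giving every cylinder event its product probability. -/
def IsBernoulliProduct {ι : Type*} (p : ℝ) (μ : Measure (ι → Bool)) : Prop :=
  IsProbabilityMeasure μ ∧
    ∀ S : Finset ι, ∀ f : ι → Bool,
      μ {ω | ∀ x ∈ S, ω x = f x} =
        ∏ x ∈ S, if f x then ENNReal.ofReal p else ENNReal.ofReal (1 - p)

/-- Reduction of a site modulo `n`, giving a point of the torus `ℤ_n²`. -/
def projT (n : ℕ) (y : Site) : ZMod n × ZMod n := ((y.1 : ZMod n), (y.2 : ZMod n))

/-- One step of the `U`-bootstrap process on the torus `ℤ_n²`. -/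
def stepT (n : ℕ) (U : Finset (Finset Site)) (A : Set (ZMod n × ZMod n)) :
    Set (ZMod n × ZMod n) :=
  A ∪ {x | ∃ X ∈ U, ∀ y ∈ X, x + projT n y ∈ A}

/-- The sets `A_t` of the `U`-bootstrap process on the torus. -/
def iterT (n : ℕ) (U : Finset (Finset Site)) (A : Set (ZMod n × ZMod n)) :
    ℕ → Set (ZMod n × ZMod n)
  | 0 => A
  | t + 1 => stepT n U (iterT n U A t)

/-- The closure of `A` under the `U`-bootstrap process on the torus. -/
def bclosureT (n : ℕ) (U : Finset (Finset Site)) (A : Set (ZMod n × ZMod n)) :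
    Set (ZMod n × ZMod n) :=
  ⋃ t : ℕ, iterT n U A t

/-- `A` percolates on the torus `ℤ_n²`. -/
def PercolatesT (n : ℕ) (U : Finset (Finset Site)) (A : Set (ZMod n × ZMod n)) : Prop :=
  bclosureT n U A = Set.univ

/-- The critical probability `p_c(ℤ_n², U)`, where `P` is the family of product
Bernoulli measures on subsets of the torus. -/
noncomputable def pcT (n : ℕ) (U : Finset (Finset Site))
    (P : ℝ → Measure ((ZMod n × ZMod n) → Bool)) : ℝ :=
  sInf {p : ℝ | p ∈ Set.Icc (0 : ℝ) 1 ∧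
    1 / 2 ≤ P p {ω | PercolatesT n U {x | ω x = true}}}

/-- The Euclidean (`ℓ₂`) distance between two sites. -/
noncomputable def dist2 (x y : Site) : ℝ :=
  Real.sqrt ((((x.1 - y.1 : ℤ) : ℝ)) ^ 2 + (((x.2 - y.2 : ℤ) : ℝ)) ^ 2)

/-- A set of sites is (strongly) connected in the graph `G_κ` joining sites at
Euclidean distance at most `κ`. -/
def Conn (κ : ℝ) (S : Set Site) : Prop :=
  ∀ x ∈ S, ∀ y ∈ S,
    Relation.ReflTransGen (fun a b : Site => b ∈ S ∧ dist2 a b ≤ κ) x y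

/-- The range `ν` of the update family:
`ν = max {‖x − y‖₂ : x, y ∈ X ∪ {0}, X ∈ U}`. -/
noncomputable def nu (U : Finset (Finset Site)) : ℝ :=
  sSup {d : ℝ | ∃ X ∈ U, ∃ x ∈ insert (0 : Site) X, ∃ y ∈ insert (0 : Site) X,
    d = dist2 x y}

/-- The diameter of a set of sites. -/
noncomputable def diam2 (K : Set Site) : ℝ :=
  sSup {d : ℝ | ∃ x ∈ K, ∃ y ∈ K, d = dist2 x y}

/-- The projection `π(K, u) = max {|⟨x − y, u⟩| : x, y ∈ K}`. -/
noncomputable def proj (K : Set Site) (u : ℝ × ℝ) : ℝ :=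
  sSup {d : ℝ | ∃ x ∈ K, ∃ y ∈ K, d = |ip x u - ip y u|}

/-- A `T`-droplet: a nonempty intersection of translated half-planes `H_u + a_u`,
`u ∈ T`. -/
def IsDroplet (T : Set (ℝ × ℝ)) (D : Set Site) : Prop :=
  D.Nonempty ∧ ∃ a : (ℝ × ℝ) → Site, D = ⋂ u ∈ T, {x : Site | ip (x - a u) u < 0}

/-- `D` is the smallest `T`-droplet containing `K`. -/
def IsMinDroplet (T : Set (ℝ × ℝ)) (K D : Set Site) : Prop :=
  IsDroplet T D ∧ K ⊆ D ∧ ∀ D' : Set Site, IsDroplet T D' → K ⊆ D' → D ⊆ D'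

/-- An `a`-cluster: a strongly connected set of `a` sites. -/
def IsCluster (κ : ℝ) (a : ℕ) (B : Finset Site) : Prop :=
  B.card = a ∧ Conn κ ↑B

/-- One step of the `α`-covering algorithm: two droplets of the current collection lying
within strong-connectivity reach of a common translate of `D̂` are replaced by the
smallest `S_B`-droplet containing their union. -/
inductive CoverStep (SB : Set (ℝ × ℝ)) (κ : ℝ) (Dhat : Set Site) :
    Multiset (Set Site) → Multiset (Set Site) → Prop
  | merge (rest : Multiset (Set Site)) (D₁ D₂ D' : Set Site) (x : Site) :
      Conn κ (D₁ ∪ D₂ ∪ ((fun z => z + x) '' Dhat)) →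
      IsMinDroplet SB (D₁ ∪ D₂) D' →
      CoverStep SB κ Dhat (D₁ ::ₘ D₂ ::ₘ rest) (D' ::ₘ rest)

/-- `𝒟` is an `α`-cover of `K`: a possible output of the `α`-covering algorithm, started
from a maximal collection of pairwise disjoint `a`-clusters of `K`, each contained in a
translate of `D̂`. -/
def IsAlphaCover (κ : ℝ) (a : ℕ) (SB : Set (ℝ × ℝ)) (Dhat : Set Site)
    (K : Set Site) (𝒟 : Multiset (Set Site)) : Prop :=
  ∃ B : List (Finset Site), ∃ c : List Site,
    B.length = c.length ∧
    (∀ Bi ∈ B, IsCluster κ a Bi ∧ ↑Bi ⊆ K) ∧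
    B.Pairwise (fun B₁ B₂ => Disjoint B₁ B₂) ∧
    (∀ B' : Finset Site, IsCluster κ a B' → ↑B' ⊆ K → ∃ Bi ∈ B, ¬ Disjoint B' Bi) ∧
    (∀ i : ℕ, ∀ h₁ : i < B.length, ∀ h₂ : i < c.length,
      ↑(B.get ⟨i, h₁⟩) ⊆ (fun z => z + c.get ⟨i, h₂⟩) '' Dhat) ∧
    Relation.ReflTransGen (CoverStep SB κ Dhat)
      ↑(c.map fun v => (fun z => z + v) '' Dhat) 𝒟

/-- The droplet `D` is `α`-covered (with respect to the initial set `A`). -/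
def AlphaCovered (κ : ℝ) (a : ℕ) (SB : Set (ℝ × ℝ)) (Dhat : Set Site)
    (A D : Set Site) : Prop :=
  IsAlphaCover κ a SB Dhat (D ∩ A) {D}

/-- The constant `ρ` used for balanced families:
`ρ = max {‖y − Z‖₂ : u ∈ S_B, |Z| = α − 1, y ∈ [H_u ∪ Z] ∖ H_u}`. -/
noncomputable def rho (U : Finset (Finset Site)) (SB : Set (ℝ × ℝ)) (a : ℕ) : ℝ :=
  sSup {d : ℝ | ∃ u ∈ SB, ∃ Z : Finset Site, Z.card = a - 1 ∧
    ∃ y ∈ bclosure U (halfPlane u ∪ ↑Z) \ halfPlane u,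
      d = sInf {r : ℝ | ∃ z ∈ Z, r = dist2 y z}}

/-- The connectivity constant `κ = 2(ρ + ν)` for balanced families. -/
noncomputable def kappaB (U : Finset (Finset Site)) (SB : Set (ℝ × ℝ)) (a : ℕ) : ℝ :=
  2 * (rho U SB a + nu U)

/-- A valid choice of the finite set `S_B` of stable directions for a balanced family:
`ᾱ(u) ≥ α` for all `u ∈ S_B`, and `S_B` meets every open semicircle. -/
def ValidSB (U : Finset (Finset Site)) (a : ℕ) (SB : Set (ℝ × ℝ)) : Prop :=
  SB.Finite ∧ SB ⊆ stableSet U ∧ (∀ u ∈ SB, (a : ℕ∞) ≤ alphaBar U u) ∧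
  ∀ w : ℝ × ℝ, unitVec w → ∃ u ∈ SB, 0 < ipR u w

/-- `D` is internally spanned by `A`: some strongly connected subset `L` of `[D ∩ A]`
has `D` as the smallest `T`-droplet containing it. -/
def InternallySpanned (U : Finset (Finset Site)) (T : Set (ℝ × ℝ)) (κ : ℝ)
    (A D : Set Site) : Prop :=
  ∃ L : Set Site, L ⊆ bclosure U (D ∩ A) ∧ Conn κ L ∧ IsMinDroplet T L D

/-- A valid choice of the set `S_U = {u*, −u*, u^l, u^r}` of stable directions for an
unbalanced family: `min {α(u*), α(−u*)} ≥ α + 1`, `u^l` (resp. `u^r`) lies in the open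
semicircle to the left (resp. right) of `u*`, and `min {ᾱ(u^l), ᾱ(u^r)} = α`. -/
def ValidSU (U : Finset (Finset Site)) (a : ℕ) (ustar ul ur : ℝ × ℝ) : Prop :=
  ustar ∈ stableSet U ∧ -ustar ∈ stableSet U ∧ ul ∈ stableSet U ∧ ur ∈ stableSet U ∧
  (a : ℕ∞) + 1 ≤ difficulty U ustar ∧ (a : ℕ∞) + 1 ≤ difficulty U (-ustar) ∧
  0 < ipR ul (-ustar.2, ustar.1) ∧ 0 < ipR ur (ustar.2, -ustar.1) ∧
  min (alphaBar U ul) (alphaBar U ur) = (a : ℕ∞)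

/-- The point of `S¹` at angle `θ`. -/
noncomputable def circlePt (θ : ℝ) : ℝ × ℝ := (Real.cos θ, Real.sin θ)

/-- `u` is a rational direction: it is parallel to a nonzero integer vector,
i.e. it has rational or infinite slope. -/
def RationalDir (u : ℝ × ℝ) : Prop :=
  ∃ x : Site, x ≠ 0 ∧ (x.1 : ℝ) * u.2 = (x.2 : ℝ) * u.1

/-- The closed arc of directions from `u` to `v` (anticlockwise). -/
def arcFrom (u v : ℝ × ℝ) : Set (ℝ × ℝ) :=
  {w | ∃ θ₁ θ₂ θ : ℝ, circlePt θ₁ = u ∧ circlePt θ₂ = v ∧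
    θ₁ ≤ θ₂ ∧ θ₂ < θ₁ + 2 * Real.pi ∧ θ ∈ Set.Icc θ₁ θ₂ ∧ circlePt θ = w}

/-- `u` and `v` are consecutive elements of `T`:
`u ≠ v` and `T ∩ [u, v] = {u, v}`. -/
def ConsecutiveIn (T : Set (ℝ × ℝ)) (u v : ℝ × ℝ) : Prop :=
  u ≠ v ∧ T ∩ arcFrom u v = {u, v}

lemma ip_add (x y : Site) (w : ℝ × ℝ) : ip (x + y) w = ip x w + ip y w := by
  simp only [ip, Prod.fst_add, Prod.snd_add, Int.cast_add]
  ring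

lemma ip_sub (x y : Site) (w : ℝ × ℝ) : ip (x - y) w = ip x w - ip y w := by
  simp only [ip, Prod.fst_sub, Prod.snd_sub, Int.cast_sub]
  ring

lemma ip_zsmul (m : ℤ) (x : Site) (w : ℝ × ℝ) : ip (m • x) w = m * ip x w := by
  simp only [ip, Prod.smul_fst, Prod.smul_snd, smul_eq_mul, Int.cast_mul]
  ring

lemma ip_neg_right (x : Site) (w : ℝ × ℝ) : ip x (-w) = -ip x w := by
  simp only [ip, Prod.fst_neg, Prod.snd_neg]
  ring

lemma unitVec_neg {u : ℝ × ℝ} (hu : unitVec u) : unitVec (-u) := by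
  simpa [unitVec] using hu

lemma dist2_nonneg (x y : Site) : 0 ≤ dist2 x y := Real.sqrt_nonneg _

lemma dist2_add_left (z x y : Site) : dist2 (z + x) (z + y) = dist2 x y := by
  simp only [dist2, Prod.fst_add, Prod.snd_add, add_sub_add_left_eq_sub]

lemma ip_sub_ip_eq_of_unitVec {u : ℝ × ℝ} (hu : unitVec u) (x y : Site) (v : ℝ × ℝ) :
    ip x v - ip y v = (ip x u - ip y u) * ipR v u
      + (ip x (rightPerp u) - ip y (rightPerp u)) * ipR v (rightPerp u) := by
  unfold unitVec at hu
  simp only [ip, ipR, rightPerp]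
  linear_combination (-(((x.1 : ℝ) - y.1) * v.1 + ((x.2 : ℝ) - y.2) * v.2)) * hu

lemma dist2_eq_of_unitVec {u : ℝ × ℝ} (hu : unitVec u) (x y : Site) :
    dist2 x y = √((ip x u - ip y u) ^ 2 + (ip x (rightPerp u) - ip y (rightPerp u)) ^ 2) := by
  unfold unitVec at hu
  simp only [dist2, ip, rightPerp]
  congr 1
  push_cast
  linear_combination (-(((x.1 : ℝ) - y.1) ^ 2 + ((x.2 : ℝ) - y.2) ^ 2)) * hu

lemma abs_ip_sub_ip_le_dist2 {w : ℝ × ℝ} (hw : unitVec w) (x y : Site) :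
    |ip x w - ip y w| ≤ dist2 x y := by
  rw [dist2_eq_of_unitVec hw]
  exact Real.abs_le_sqrt (le_add_of_nonneg_right (sq_nonneg _))

lemma dist_le_dist2 (x y : Site) : dist x y ≤ dist2 x y := by
  rw [Prod.dist_eq, Int.dist_eq, Int.dist_eq]
  refine max_le (Real.abs_le_sqrt ?_) (Real.abs_le_sqrt ?_) <;>
  · push_cast
    nlinarith [sq_nonneg ((x.1 : ℝ) - y.1), sq_nonneg ((x.2 : ℝ) - y.2)]

lemma finite_of_forall_dist2_le {S : Set Site} {x₀ : Site} {r : ℝ}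
    (h : ∀ x ∈ S, dist2 x x₀ ≤ r) : S.Finite :=
  (isCompact_closedBall x₀ r).finite_of_discrete.subset
    fun x hx => (dist_le_dist2 x x₀).trans (h x hx)

lemma diam2_le {D : Set Site} {r : ℝ} (hD : D.Nonempty)
    (h : ∀ x ∈ D, ∀ y ∈ D, dist2 x y ≤ r) : diam2 D ≤ r := by
  obtain ⟨x, hx⟩ := hD
  exact csSup_le ⟨_, x, hx, x, hx, rfl⟩ (by rintro _ ⟨x, hx, y, hy, rfl⟩; exact h x hx y hy)

lemma exists_site_ip_mem_Ioc {w : ℝ × ℝ} (hw : unitVec w) (M : ℝ) :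
    ∃ g : Site, M < ip g w ∧ ip g w ≤ M + 1 := by
  obtain ⟨e, he₀, he₁⟩ : ∃ e : Site, 0 < ip e w ∧ ip e w ≤ 1 := by
    have h₁ : w.1 ^ 2 ≤ 1 := by nlinarith [sq_nonneg w.2, hw.symm]
    have h₂ : w.2 ^ 2 ≤ 1 := by nlinarith [sq_nonneg w.1, hw.symm]
    rw [sq_le_one_iff_abs_le_one, abs_le] at h₁ h₂
    rcases lt_trichotomy w.1 0 with h | h | h
    · exact ⟨(-1, 0), by simp [ip]; linarith, by simp [ip]; linarith⟩
    · rcases lt_trichotomy w.2 0 with h' | h' | h'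
      · exact ⟨(0, -1), by simp [ip]; linarith, by simp [ip]; linarith⟩
      · simp [unitVec, h, h'] at hw
      · exact ⟨(0, 1), by simp [ip]; linarith, by simp [ip]; linarith⟩
    · exact ⟨(1, 0), by simp [ip]; linarith, by simp [ip]; linarith⟩
  obtain ⟨m, ⟨hm, hm'⟩, -⟩ := existsUnique_add_zsmul_mem_Ioc he₀ 0 M
  refine ⟨m • e, ?_, ?_⟩ <;> rw [ip_zsmul] <;> simp only [zero_add, zsmul_eq_mul] at hm hm' <;>
    linarith

lemma IsStable.exists_ip_nonneg {U : Finset (Finset Site)} {w : ℝ × ℝ} (hw : IsStable U w)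
    {X : Finset Site} (hX : X ∈ U) : ∃ y ∈ X, 0 ≤ ip y w := by
  by_contra! h
  have h₀ : (0 : Site) ∈ bclosure U (halfPlane w) :=
    Set.mem_iUnion.2 ⟨1, Or.inr ⟨X, hX, fun y hy => by
      simpa [iter, halfPlane, ip_add] using h y hy⟩⟩
  rw [hw] at h₀
  simp [halfPlane, ip] at h₀

lemma bclosure_subset {U : Finset (Finset Site)} {Z W : Set Site} (hZ : Z ⊆ W)
    (hW : ∀ x, ∀ X ∈ U, (∀ y ∈ X, x + y ∈ W) → x ∈ W) : bclosure U Z ⊆ W := by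
  have hiter : ∀ t, iter U Z t ⊆ W := by
    intro t
    induction t with
    | zero => exact hZ
    | succ t ih =>
      rintro x (hx | ⟨X, hX, hXx⟩)
      exacts [ih hx, hW x X hX fun y hy => ih (hXx y hy)]
  exact Set.iUnion_subset hiter

lemma dist2_le_nu {U : Finset (Finset Site)} {X : Finset Site} (hX : X ∈ U) {x y : Site}
    (hx : x ∈ insert (0 : Site) X) (hy : y ∈ insert (0 : Site) X) : dist2 x y ≤ nu U := by
  classical
  refine le_csSup (Set.Finite.bddAbove ?_) ⟨X, hX, x, hx, y, hy, rfl⟩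
  refine (((U.biUnion fun X => insert 0 X ×ˢ insert 0 X).image
    fun p => dist2 p.1 p.2).finite_toSet).subset ?_
  rintro _ ⟨X, hX, x, hx, y, hy, rfl⟩
  exact Finset.mem_coe.2 (Finset.mem_image.2
    ⟨(x, y), Finset.mem_biUnion.2 ⟨X, hX, Finset.mem_product.2 ⟨hx, hy⟩⟩, rfl⟩)

lemma nu_nonneg (U : Finset (Finset Site)) : 0 ≤ nu U :=
  Real.sSup_nonneg fun _ ⟨_, _, x, _, y, _, hd⟩ => hd ▸ dist2_nonneg x y

def FarApart (κ : ℝ) (S S' : Set Site) : Prop := ∀ x ∈ S, ∀ y ∈ S', κ < dist2 x y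

lemma Conn.subset_of_subset_biUnion {β : Type*} {κ : ℝ} {L : Set Site} {s : Set β}
    {S : β → Set Site} (hL : Conn κ L) (hfar : s.Pairwise fun j k => FarApart κ (S j) (S k))
    (hcov : L ⊆ ⋃ j ∈ s, S j) {j : β} (hj : j ∈ s) {x : Site} (hx : x ∈ L)
    (hxj : x ∈ S j) : L ⊆ S j := by
  intro y hy
  have hpath := hL x hx y hy
  clear hy
  induction hpath with
  | refl => exact hxj
  | tail _ hbc ih =>
    obtain ⟨k, hk, hck⟩ := Set.mem_iUnion₂.1 (hcov hbc.1)
    by_contra hcj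
    exact (hfar hj hk (fun hjk => hcj (hjk ▸ hck)) _ ih _ hck).not_ge hbc.2

lemma IsMinDroplet.nonempty {T : Set (ℝ × ℝ)} {K D : Set Site} {u : ℝ × ℝ} (hu : u ∈ T)
    (hD : IsMinDroplet T K D) : K.Nonempty := by
  rw [Set.nonempty_iff_ne_empty]
  rintro rfl
  obtain ⟨⟨⟨x, hx⟩, a, rfl⟩, -, hmin⟩ := hD
  -- `D` would lie in each of its translates, in particular the one by `x - a u`
  have hshift := hmin (⋂ v ∈ T, {y : Site | ip (y - (a v + (x - a u))) v < 0})
    ⟨⟨x + (x - a u), Set.mem_iInter₂.2 fun v hv => by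
      simpa [add_sub_add_right_eq_sub] using Set.mem_iInter₂.1 hx v hv⟩, _, rfl⟩
    (Set.empty_subset _) hx
  have : ip (x - (a u + (x - a u))) u < 0 := Set.mem_iInter₂.1 hshift u hu
  simp [ip] at this

lemma IsMinDroplet.ip_le_add_one {T : Set (ℝ × ℝ)} {K D : Set Site} {u : ℝ × ℝ} {M : ℝ}
    (hD : IsMinDroplet T K D) (hK : K.Nonempty) (hu : u ∈ T) (hw : unitVec u)
    (hM : ∀ z ∈ K, ip z u ≤ M) : ∀ x ∈ D, ip x u ≤ M + 1 := by
  classical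
  obtain ⟨⟨-, a, rfl⟩, hKD, hmin⟩ := hD
  intro x hx
  obtain ⟨g, hg, hg'⟩ := exists_site_ip_mem_Ioc hw M
  -- move the side of `D` with normal `u` to a lattice point just beyond `K`
  set D' := ⋂ v ∈ T, {y : Site | ip (y - Function.update a u g v) v < 0}
  have hKD' : K ⊆ D' := fun z hz => Set.mem_iInter₂.2 fun v hv => by
    rcases eq_or_ne v u with rfl | hvu
    · simp only [Set.mem_ofPred_eq, Function.update_self, ip_sub]
      linarith [hM z hz]
    · simpa [Function.update_of_ne hvu] using Set.mem_iInter₂.1 (hKD hz) v hv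
  have : ip (x - Function.update a u g u) u < 0 :=
    Set.mem_iInter₂.1 (hmin D' ⟨hK.mono hKD', _, rfl⟩ hKD' hx) u hu
  rw [Function.update_self, ip_sub] at this
  linarith

noncomputable def supportFn (P : Finset Site) (u : ℝ × ℝ) : ℝ :=
  sSup ((fun z => ip z u) '' ↑P)

lemma ip_le_supportFn {P : Finset Site} {z : Site} (hz : z ∈ P) (u : ℝ × ℝ) :
    ip z u ≤ supportFn P u :=
  le_csSup (P.finite_toSet.image _).bddAbove ⟨z, hz, rfl⟩

lemma supportFn_union {P Q : Finset Site} (hP : P.Nonempty) (hQ : Q.Nonempty) (u : ℝ × ℝ) :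
    supportFn (P ∪ Q) u = max (supportFn P u) (supportFn Q u) := by
  rw [supportFn, Finset.coe_union, Set.image_union, csSup_union (P.finite_toSet.image _).bddAbove
    ((P.coe_nonempty.2 hP).image _) (Q.finite_toSet.image _).bddAbove
    ((Q.coe_nonempty.2 hQ).image _)]
  rfl

lemma supportFn_singleton (z : Site) (u : ℝ × ℝ) : supportFn {z} u = ip z u := by
  rw [supportFn, Finset.coe_singleton, Set.image_singleton, csSup_singleton]

/-- Outer normals `dir i` of a family of polygons `{x | ∀ i, ⟨x, dir i⟩ ≤ h i}`: the weights
exhibit `0` as a positive combination of the normals, and `bound` controls the diameter. -/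
structure PolygonFrame (ι : Type*) [Fintype ι] where
  dir : ι → ℝ × ℝ
  weight : ι → ℝ
  bound : ℝ
  unitVec_dir : ∀ i, unitVec (dir i)
  weight_pos : ∀ i, 0 < weight i
  sum_weight_smul_dir : ∑ i, weight i • dir i = 0
  bound_pos : 0 < bound
  dist2_le : ∀ x y : Site, ∀ m : ℝ,
    (∀ i, ip x (dir i) - ip y (dir i) ≤ m) → dist2 x y ≤ bound * m

namespace PolygonFrame

variable {ι : Type*} [Fintype ι] (F : PolygonFrame ι) {U : Finset (Finset Site)}

lemma sum_weight_mul_ip (z : Site) : ∑ i, F.weight i * ip z (F.dir i) = 0 := by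
  have h := congrArg (fun v : ℝ × ℝ => (z.1 : ℝ) * v.1 + z.2 * v.2) F.sum_weight_smul_dir
  simp only [Prod.fst_sum, Prod.snd_sum, Prod.smul_fst, Prod.smul_snd, smul_eq_mul,
    Finset.mul_sum, ← Finset.sum_add_distrib, Prod.fst_zero, Prod.snd_zero, mul_zero,
    add_zero] at h
  rw [← h]
  simp only [ip]
  exact Finset.sum_congr rfl fun i _ => by ring

lemma nonempty (F : PolygonFrame ι) : Nonempty ι := by
  by_contra h
  have := F.dist2_le (1, 0) 0 0 fun i => (h ⟨i⟩).elim
  norm_num [dist2] at this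

lemma sum_weight_pos : 0 < ∑ i, F.weight i :=
  have := F.nonempty
  Finset.sum_pos (fun i _ => F.weight_pos i) Finset.univ_nonempty

def hull (P : Finset Site) : Set Site :=
  {x | ∀ i, ip x (F.dir i) ≤ supportFn P (F.dir i)}

noncomputable def width (P : Finset Site) : ℝ :=
  ∑ i, F.weight i * supportFn P (F.dir i)

noncomputable def diamConst : ℝ := F.bound * ∑ i, (F.weight i)⁻¹

lemma diamConst_pos : 0 < F.diamConst :=
  have := F.nonempty
  mul_pos F.bound_pos (Finset.sum_pos (fun i _ => inv_pos.2 (F.weight_pos i)) Finset.univ_nonempty)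

lemma subset_hull (P : Finset Site) : ↑P ⊆ F.hull P :=
  fun _ hz _ => ip_le_supportFn hz _

lemma width_singleton (z : Site) : F.width {z} = 0 := by
  simp only [width, supportFn_singleton, F.sum_weight_mul_ip]

lemma width_nonneg {P : Finset Site} (hP : P.Nonempty) : 0 ≤ F.width P := by
  obtain ⟨z, hz⟩ := hP
  rw [← F.sum_weight_mul_ip z]
  exact Finset.sum_le_sum fun i _ =>
    mul_le_mul_of_nonneg_left (ip_le_supportFn hz _) (F.weight_pos i).le

lemma weight_mul_ip_sub_le {x y : Site} {h : ι → ℝ} (hx : ∀ j, ip x (F.dir j) ≤ h j)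
    (hy : ∀ j, ip y (F.dir j) ≤ h j) (i : ι) :
    F.weight i * (ip x (F.dir i) - ip y (F.dir i)) ≤ ∑ j, F.weight j * h j := by
  have hslack : ∀ j, 0 ≤ F.weight j * (h j - ip y (F.dir j)) := fun j =>
    mul_nonneg (F.weight_pos j).le (sub_nonneg.2 (hy j))
  calc F.weight i * (ip x (F.dir i) - ip y (F.dir i))
      ≤ F.weight i * (h i - ip y (F.dir i)) := by
        gcongr
        · exact (F.weight_pos i).le
        · exact hx i
    _ ≤ ∑ j, F.weight j * (h j - ip y (F.dir j)) :=
        Finset.single_le_sum (fun j _ => hslack j) (Finset.mem_univ i)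
    _ = ∑ j, F.weight j * h j := by
        simp only [mul_sub, Finset.sum_sub_distrib, F.sum_weight_mul_ip, sub_zero]

lemma dist2_le_diamConst_mul {x y : Site} {h : ι → ℝ} (hx : ∀ j, ip x (F.dir j) ≤ h j)
    (hy : ∀ j, ip y (F.dir j) ≤ h j) :
    dist2 x y ≤ F.diamConst * ∑ j, F.weight j * h j := by
  set W := ∑ j, F.weight j * h j
  have hW : 0 ≤ W := by
    obtain ⟨i⟩ := F.nonempty
    simpa using F.weight_mul_ip_sub_le hx hx i
  rw [diamConst, mul_assoc]
  refine F.dist2_le x y _ fun i => ?_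
  calc ip x (F.dir i) - ip y (F.dir i) ≤ W * (F.weight i)⁻¹ := by
        rw [← div_eq_mul_inv, le_div_iff₀' (F.weight_pos i)]
        exact F.weight_mul_ip_sub_le hx hy i
    _ ≤ W * ∑ j, (F.weight j)⁻¹ := by
        gcongr
        exact Finset.single_le_sum (fun j _ => (inv_pos.2 (F.weight_pos j)).le)
          (Finset.mem_univ i)
    _ = (∑ j, (F.weight j)⁻¹) * W := mul_comm _ _

lemma finite_of_isDroplet {T : Set (ℝ × ℝ)} {D : Set Site} (hT : ∀ i, F.dir i ∈ T)
    (hD : IsDroplet T D) : D.Finite := by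
  obtain ⟨⟨x₀, hx₀⟩, a, rfl⟩ := hD
  have hpoly : ∀ x ∈ ⋂ u ∈ T, {x : Site | ip (x - a u) u < 0}, ∀ i,
      ip x (F.dir i) ≤ ip (a (F.dir i)) (F.dir i) := fun x hx i => by
    have : ip (x - a (F.dir i)) (F.dir i) < 0 := Set.mem_iInter₂.1 hx _ (hT i)
    rw [ip_sub] at this
    linarith
  exact finite_of_forall_dist2_le fun x hx =>
    F.dist2_le_diamConst_mul (hpoly x hx) (hpoly x₀ hx₀)

lemma width_union_le {P Q : Finset Site} (hP : P.Nonempty) (hQ : Q.Nonempty) {x y : Site}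
    {κ : ℝ} (hx : x ∈ F.hull P) (hy : y ∈ F.hull Q) (hxy : dist2 x y ≤ κ) :
    F.width (P ∪ Q) ≤ F.width P + F.width Q + (∑ i, F.weight i) * κ := by
  have key : ∀ i, supportFn (P ∪ Q) (F.dir i) ≤
      supportFn P (F.dir i) + supportFn Q (F.dir i) - ip x (F.dir i) + κ := fun i => by
    have hclose := (abs_le.1 ((abs_ip_sub_ip_le_dist2 (F.unitVec_dir i) x y).trans hxy)).2
    have := hx i
    have := hy i
    have := (dist2_nonneg x y).trans hxy
    rw [supportFn_union hP hQ]
    exact max_le (by linarith) (by linarith)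
  calc F.width (P ∪ Q)
      ≤ ∑ i, F.weight i *
          (supportFn P (F.dir i) + supportFn Q (F.dir i) - ip x (F.dir i) + κ) :=
        Finset.sum_le_sum fun i _ => mul_le_mul_of_nonneg_left (key i) (F.weight_pos i).le
    _ = F.width P + F.width Q + (∑ i, F.weight i) * κ := by
        simp only [mul_add, mul_sub, Finset.sum_add_distrib, Finset.sum_sub_distrib,
          F.sum_weight_mul_ip, Finset.sum_mul, width, sub_zero]

lemma exists_merge {c : ℝ} (hc₀ : 0 ≤ c) {parts : Finset (Finset Site)}
    (hne : ∀ P ∈ parts, P.Nonempty) {P Q : Finset Site} (hP : P ∈ parts) (hQ : Q ∈ parts)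
    (hPQ : P ≠ Q) (hmerge : F.width (P ∪ Q) ≤ F.width P + F.width Q + c) :
    ∃ parts₁ : Finset (Finset Site), parts₁.card < parts.card ∧ (∀ R ∈ parts₁, R.Nonempty) ∧
      (∀ R ∈ parts, ∃ R' ∈ parts₁, R ⊆ R') ∧
      ∑ R ∈ parts₁, (F.width R + c) ≤ ∑ R ∈ parts, (F.width R + c) := by
  classical
  have hQ' : Q ∈ parts.erase P := Finset.mem_erase.2 ⟨Ne.symm hPQ, hQ⟩
  set rest := (parts.erase P).erase Q
  have hrest : ∀ R ∈ rest, R ∈ parts := fun R hR =>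
    Finset.mem_of_mem_erase (Finset.mem_of_mem_erase hR)
  have hne₁ : ∀ R ∈ insert (P ∪ Q) rest, R.Nonempty := by
    simp only [Finset.mem_insert, forall_eq_or_imp]
    exact ⟨(hne P hP).mono Finset.subset_union_left, fun R hR => hne R (hrest R hR)⟩
  refine ⟨insert (P ∪ Q) rest, ?_, hne₁, fun R hR => ?_, ?_⟩
  · have h₁ := Finset.card_insert_le (P ∪ Q) rest
    have h₂ : rest.card + 1 = (parts.erase P).card := Finset.card_erase_add_one hQ'
    have h₃ := Finset.card_erase_add_one hP
    omega
  · by_cases hR' : R ∈ rest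
    · exact ⟨R, Finset.mem_insert_of_mem hR', subset_rfl⟩
    refine ⟨P ∪ Q, Finset.mem_insert_self _ _, ?_⟩
    have : R = P ∨ R = Q := by
      simp only [rest, Finset.mem_erase, not_and_or, not_not] at hR'
      tauto
    rcases this with rfl | rfl
    exacts [Finset.subset_union_left, Finset.subset_union_right]
  · calc ∑ R ∈ insert (P ∪ Q) rest, (F.width R + c)
        ≤ (F.width (P ∪ Q) + c) + ∑ R ∈ rest, (F.width R + c) := by
          by_cases hmem : P ∪ Q ∈ rest
          · rw [Finset.insert_eq_of_mem hmem]
            linarith [F.width_nonneg (hne₁ _ (Finset.mem_insert_self _ _))]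
          · rw [Finset.sum_insert hmem]
      _ ≤ (F.width P + c) + ((F.width Q + c) + ∑ R ∈ rest, (F.width R + c)) := by
          linarith
      _ = ∑ R ∈ parts, (F.width R + c) := by
          rw [← Finset.add_sum_erase _ _ hP, ← Finset.add_sum_erase _ _ hQ']

/-- Merge two parts whose hulls come within distance `κ` as long as there are such parts;
each merge costs at most `c` in weighted width and removes at least one part. -/
lemma exists_farApart_coarsening {κ c : ℝ} (hc₀ : 0 ≤ c) (hc : (∑ i, F.weight i) * κ ≤ c)
    (parts : Finset (Finset Site)) (hne : ∀ P ∈ parts, P.Nonempty) :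
    ∃ parts' : Finset (Finset Site), (∀ P ∈ parts', P.Nonempty) ∧
      (∀ P ∈ parts, ∃ P' ∈ parts', P ⊆ P') ∧
      (parts' : Set (Finset Site)).Pairwise (fun P Q => FarApart κ (F.hull P) (F.hull Q)) ∧
      ∑ P ∈ parts', (F.width P + c) ≤ ∑ P ∈ parts, (F.width P + c) := by
  induction hn : parts.card using Nat.strong_induction_on generalizing parts with
  | _ n ih =>
  by_cases hfar : (parts : Set (Finset Site)).Pairwise fun P Q => FarApart κ (F.hull P) (F.hull Q)
  · exact ⟨parts, hne, fun P hP => ⟨P, hP, subset_rfl⟩, hfar, le_rfl⟩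
  simp only [Set.Pairwise, FarApart, not_forall, not_lt, exists_prop] at hfar
  obtain ⟨P, hP, Q, hQ, hPQ, x, hx, y, hy, hxy⟩ := hfar
  obtain ⟨parts₁, hcard, hne₁, hcov₁, hsum₁⟩ := F.exists_merge hc₀ hne hP hQ hPQ
    ((F.width_union_le (hne P hP) (hne Q hQ) hx hy hxy).trans (by linarith))
  obtain ⟨parts', hne', hcov', hfar', hsum'⟩ := ih _ (hn ▸ hcard) _ hne₁ rfl
  refine ⟨parts', hne', fun R hR => ?_, hfar', hsum'.trans hsum₁⟩
  obtain ⟨R₁, hR₁, hRR₁⟩ := hcov₁ R hR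
  obtain ⟨R', hR', hR₁R'⟩ := hcov' R₁ hR₁
  exact ⟨R', hR', hRR₁.trans hR₁R'⟩

lemma exists_farApart_cover {κ c : ℝ} (hc₀ : 0 ≤ c) (hc : (∑ i, F.weight i) * κ ≤ c)
    (Z : Finset Site) :
    ∃ parts : Finset (Finset Site), ↑Z ⊆ ⋃ P ∈ parts, F.hull P ∧
      (parts : Set (Finset Site)).Pairwise (fun P Q => FarApart κ (F.hull P) (F.hull Q)) ∧
      ∀ P ∈ parts, F.width P + c ≤ c * Z.card := by
  classical
  obtain ⟨parts, hne, hcov, hfar, hsum⟩ := F.exists_farApart_coarsening hc₀ hc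
    (Z.image singleton) (by
      simp only [Finset.forall_mem_image, Finset.singleton_nonempty, implies_true])
  refine ⟨parts, fun z hz => ?_, hfar, fun P hP => ?_⟩
  · obtain ⟨P, hP, hzP⟩ := hcov {z} (Finset.mem_image_of_mem _ hz)
    exact Set.mem_iUnion₂.2 ⟨P, hP, F.subset_hull P (hzP (Finset.mem_singleton_self z))⟩
  · calc F.width P + c ≤ ∑ P ∈ parts, (F.width P + c) :=
          Finset.single_le_sum (fun R hR => add_nonneg (F.width_nonneg (hne R hR)) hc₀) hP
      _ ≤ ∑ z ∈ Z, (F.width {z} + c) := by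
          rwa [Finset.sum_image (Finset.singleton_injective.injOn)] at hsum
      _ = c * Z.card := by simp [width_singleton, mul_comm]

lemma mem_hull_of_forall_add_mem (hstab : ∀ i, IsStable U (F.dir i)) {P : Finset Site}
    {x : Site} {X : Finset Site} (hX : X ∈ U) (h : ∀ y ∈ X, x + y ∈ F.hull P) :
    x ∈ F.hull P := fun i => by
  obtain ⟨y, hy, hy₀⟩ := (hstab i).exists_ip_nonneg hX
  have := h y hy i
  rw [ip_add] at this
  linarith

/-- An update rule has range `ν`, so it cannot reach into two hulls more than `ν` apart. -/
lemma bclosure_subset_biUnion_hull (hstab : ∀ i, IsStable U (F.dir i)) {κ : ℝ}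
    (hκ : nu U ≤ κ) {parts : Finset (Finset Site)}
    (hfar : (parts : Set (Finset Site)).Pairwise fun P Q => FarApart κ (F.hull P) (F.hull Q))
    {Z : Set Site} (hZ : Z ⊆ ⋃ P ∈ parts, F.hull P) :
    bclosure U Z ⊆ ⋃ P ∈ parts, F.hull P := by
  refine bclosure_subset hZ fun x X hX hXx => ?_
  obtain ⟨i⟩ := F.nonempty
  obtain ⟨y₀, hy₀, -⟩ := (hstab i).exists_ip_nonneg hX
  obtain ⟨P, hP, hxP⟩ := Set.mem_iUnion₂.1 (hXx y₀ hy₀)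
  refine Set.mem_iUnion₂.2 ⟨P, hP, F.mem_hull_of_forall_add_mem hstab hX fun y hy => ?_⟩
  obtain ⟨Q, hQ, hxQ⟩ := Set.mem_iUnion₂.1 (hXx y hy)
  by_contra hyP
  have hclose : dist2 (x + y₀) (x + y) ≤ κ := by
    rw [dist2_add_left]
    exact (dist2_le_nu hX (Finset.mem_insert_of_mem hy₀) (Finset.mem_insert_of_mem hy)).trans hκ
  exact (hfar hP hQ (fun hPQ => hyP (hPQ ▸ hxQ)) _ hxP _ hxQ).not_ge hclose

theorem diam2_le_of_internallySpanned (hstab : ∀ i, IsStable U (F.dir i))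
    {T : Set (ℝ × ℝ)} (hT : ∀ i, F.dir i ∈ T) {κ : ℝ} (hκ : nu U ≤ κ) {A D : Set Site}
    (hD : InternallySpanned U T κ A D) :
    diam2 D ≤ F.diamConst * ((∑ i, F.weight i) * (κ + 1)) * (D ∩ A).ncard := by
  obtain ⟨L, hLA, hLconn, hLD⟩ := hD
  set c := (∑ i, F.weight i) * (κ + 1)
  have hκ₀ : 0 ≤ κ := (nu_nonneg U).trans hκ
  have hc₀ : 0 ≤ c := mul_nonneg F.sum_weight_pos.le (by linarith)
  have hZ : (D ∩ A).Finite := (F.finite_of_isDroplet hT hLD.1).subset Set.inter_subset_left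
  obtain ⟨parts, hcov, hfar, hwidth⟩ :=
    F.exists_farApart_cover hc₀
      (mul_le_mul_of_nonneg_left (le_add_of_nonneg_right zero_le_one) F.sum_weight_pos.le)
      hZ.toFinset
  rw [hZ.coe_toFinset] at hcov
  have hLcov := hLA.trans (F.bclosure_subset_biUnion_hull hstab hκ hfar hcov)
  obtain ⟨i₀⟩ := F.nonempty
  obtain ⟨x₀, hx₀⟩ := hLD.nonempty (hT i₀)
  obtain ⟨P, hP, hx₀P⟩ := Set.mem_iUnion₂.1 (hLcov hx₀)
  have hLP := hLconn.subset_of_subset_biUnion hfar hLcov hP hx₀ hx₀P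
  have hDP : ∀ x ∈ D, ∀ i, ip x (F.dir i) ≤ supportFn P (F.dir i) + 1 := fun x hx i =>
    hLD.ip_le_add_one ⟨x₀, hx₀⟩ (hT i) (F.unitVec_dir i) (fun z hz => hLP hz i) x hx
  have hW : ∑ i, F.weight i * (supportFn P (F.dir i) + 1) ≤ c * (D ∩ A).ncard := by
    have hΛ : ∑ i, F.weight i ≤ c := le_mul_of_one_le_right F.sum_weight_pos.le (by linarith)
    have := hwidth P hP
    rw [← Set.ncard_eq_toFinset_card _ hZ] at this
    simp only [mul_add, mul_one, Finset.sum_add_distrib]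
    exact (add_le_add_right hΛ _).trans this
  refine diam2_le hLD.1.1 fun x hx y hy => (F.dist2_le_diamConst_mul (hDP x hx) (hDP y hy)).trans ?_
  rw [mul_assoc]
  exact mul_le_mul_of_nonneg_left hW F.diamConst_pos.le

end PolygonFrame

section FourDirections

variable {u ul ur : ℝ × ℝ}

lemma exists_pos_weights_sum_smul_eq_zero (hu : unitVec u) (hsl : 0 < ipR ul (-u.2, u.1))
    (hsr : 0 < ipR ur (u.2, -u.1)) :
    ∃ w : Fin 4 → ℝ, (∀ i, 0 < w i) ∧ ∑ i, w i • ![u, -u, ul, ur] i = 0 := by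
  unfold unitVec at hu
  set s := ipR ur (u.2, -u.1)
  set s' := ipR ul (-u.2, u.1)
  -- in the orthonormal basis `(u, u⊥)`, `s • ul + s' • ur` has no `u⊥`-component
  set e := s * ipR ul u + s' * ipR ur u
  refine ⟨![1 + |e|, 1 + |e| + e, s, s'], fun i => ?_, ?_⟩
  · fin_cases i
    exacts [show 0 < 1 + |e| by positivity, show 0 < 1 + |e| + e by linarith [neg_abs_le e],
      hsr, hsl]
  · simp only [Fin.sum_univ_four, Matrix.cons_val_zero, Matrix.cons_val_one, Matrix.cons_val_two,
      Matrix.cons_val_three, Matrix.head_cons, Matrix.tail_cons, smul_neg]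
    ext
    · simp only [Prod.fst_add, Prod.fst_neg, Prod.smul_fst, smul_eq_mul, Prod.fst_zero, s, s', e,
        ipR]
      linear_combination -u.1 * (ur.1 * ul.2 - ul.1 * ur.2) * hu
    · simp only [Prod.snd_add, Prod.snd_neg, Prod.smul_snd, smul_eq_mul, Prod.snd_zero, s, s', e,
        ipR]
      linear_combination -u.2 * (ur.1 * ul.2 - ul.1 * ur.2) * hu

lemma exists_dist2_le_of_forall_ip_sub_le (hu : unitVec u) (hsl : 0 < ipR ul (-u.2, u.1))
    (hsr : 0 < ipR ur (u.2, -u.1)) :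
    ∃ C : ℝ, 0 < C ∧ ∀ x y : Site, ∀ m : ℝ,
      (∀ i, ip x (![u, -u, ul, ur] i) - ip y (![u, -u, ul, ur] i) ≤ m) → dist2 x y ≤ C * m := by
  set s := ipR ur (u.2, -u.1)
  set s' := ipR ul (-u.2, u.1)
  set t := ipR ur u
  set t' := ipR ul u
  refine ⟨1 + (1 + |t|) / s + (1 + |t'|) / s', by positivity, fun x y m h => ?_⟩
  set A := ip x u - ip y u
  set B := ip x (rightPerp u) - ip y (rightPerp u)
  have hAm : |A| ≤ m := by
    have h₂ : ip x (-u) - ip y (-u) ≤ m := h 1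
    rw [ip_neg_right, ip_neg_right] at h₂
    exact abs_le.2 ⟨by simp only [A]; linarith, h 0⟩
  have hm : 0 ≤ m := (abs_nonneg A).trans hAm
  have hB : B ≤ (1 + |t|) / s * m := by
    have h₄ : A * t + B * s ≤ m := ip_sub_ip_eq_of_unitVec hu x y ur ▸ h 3
    have hAt : |A * t| ≤ m * |t| := by rw [abs_mul]; gcongr
    rw [div_mul_eq_mul_div, le_div_iff₀ hsr]
    nlinarith [abs_le.1 hAt]
  have hB' : -B ≤ (1 + |t'|) / s' * m := by
    have h₃ : A * t' - B * s' ≤ m := by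
      have hperp : ipR ul (rightPerp u) = -s' := by simp only [ipR, rightPerp, s']; ring
      have := ip_sub_ip_eq_of_unitVec hu x y ul ▸ h 2
      rw [hperp] at this
      linarith
    have hAt' : |A * t'| ≤ m * |t'| := by rw [abs_mul]; gcongr
    rw [div_mul_eq_mul_div, le_div_iff₀ hsl]
    nlinarith [abs_le.1 hAt']
  have hBm : |B| ≤ (1 + |t|) / s * m + (1 + |t'|) / s' * m :=
    abs_le.2 ⟨by linarith [show 0 ≤ (1 + |t|) / s * m by positivity],
      by linarith [show 0 ≤ (1 + |t'|) / s' * m by positivity]⟩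
  rw [dist2_eq_of_unitVec hu, Real.sqrt_le_iff]
  constructor
  · positivity
  · nlinarith [abs_nonneg A, abs_nonneg B, sq_abs A, sq_abs B]

lemma exists_polygonFrame (hu : unitVec u) (hl : unitVec ul) (hr : unitVec ur)
    (hsl : 0 < ipR ul (-u.2, u.1)) (hsr : 0 < ipR ur (u.2, -u.1)) :
    ∃ F : PolygonFrame (Fin 4), F.dir = ![u, -u, ul, ur] := by
  obtain ⟨w, hw, hsum⟩ := exists_pos_weights_sum_smul_eq_zero hu hsl hsr
  obtain ⟨C, hC, hdist⟩ := exists_dist2_le_of_forall_ip_sub_le hu hsl hsr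
  have hunit : ∀ i, unitVec (![u, -u, ul, ur] i) := by
    intro i
    fin_cases i
    exacts [hu, unitVec_neg hu, hl, hr]
  exact ⟨⟨_, w, C, hunit, hw, hsum, hC, hdist⟩, rfl⟩

end FourDirections

theorem extremal_internallySpanned_general
    (U : Finset (Finset Site))
    (a : ℕ)
    (ustar ul ur : ℝ × ℝ) (hSU : ValidSU U a ustar ul ur) :
    ∃ c : ℝ, 0 < c ∧ ∀ A D : Set Site,
      InternallySpanned U {ustar, -ustar, ul, ur} (3 * nu U) A D →
      c * diam2 D ≤ ((D ∩ A).ncard : ℝ) := by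
  obtain ⟨hstar, hnstar, hl, hr, -, -, hsl, hsr, -⟩ := hSU
  obtain ⟨F, hF⟩ := exists_polygonFrame hstar.1 hl.1 hr.1 hsl hsr
  have hstab : ∀ i, IsStable U (F.dir i) := by
    intro i
    fin_cases i <;> simp only [hF]
    exacts [hstar.2, hnstar.2, hl.2, hr.2]
  have hT : ∀ i, F.dir i ∈ ({ustar, -ustar, ul, ur} : Set (ℝ × ℝ)) := by
    intro i
    fin_cases i <;> simp [hF]
  have hν := nu_nonneg U
  have hK : 0 < F.diamConst * ((∑ i, F.weight i) * (3 * nu U + 1)) :=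
    mul_pos F.diamConst_pos (mul_pos F.sum_weight_pos (by linarith))
  refine ⟨_, inv_pos.2 hK, fun A D hD => ?_⟩
  rw [inv_mul_le_iff₀ hK]
  exact F.diam2_le_of_internallySpanned hstab hT (by linarith) hD

/-- **Extremal lemma for internally spanned droplets (Lemma 5.10).**  For an unbalanced
critical family there is a constant `c > 0` such that every internally spanned
`S_U`-droplet `D` satisfies `|D ∩ A| ≥ c · diam D`. -/
theorem extremal_internallySpanned
    (U : Finset (Finset Site)) (hU : ∀ X ∈ U, (0 : Site) ∉ X)
    (hcrit : Critical U) (hunbal : ¬ BalancedCond U)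
    (a : ℕ) (ha : famDifficulty U = (a : ℕ∞))
    (ustar ul ur : ℝ × ℝ) (hSU : ValidSU U a ustar ul ur) :
    ∃ c : ℝ, 0 < c ∧ ∀ A D : Set Site,
      InternallySpanned U {ustar, -ustar, ul, ur} (3 * nu U) A D →
      c * diam2 D ≤ ((D ∩ A).ncard : ℝ) :=
  extremal_internallySpanned_general U a ustar ul ur hSU

end BP
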